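/- arXiv:1210.2533 — 7 statements merged into one kernel-verified Lean document; each statement's English description precedes it below -/
import Mathlib

section
/- Let r ≥ 1, let A be an r × r matrix over ℚ, let d_1, …, d_r be positive rationals with d_i·A_{ij} = d_j·A_{ji} for all i, j, and let D be a positive rational. Let s = r − rank(A), and let B be an s × r matrix over ℚ such that the (r+s) × r block matrix with top block A and bottom block B has rank r. Define the (r+s) × (r+s) matrix Ĉ by Ĉ_{ij} = A_{ij} for i, j ≤ r; Ĉ_{i,r+j} = D·d_i^{−1}·B_{ji} for i ≤ r and j ≤ s; Ĉ_{r+i,j} = B_{ij} for i ≤ s and j ≤ r; and Ĉ_{r+i,r+j} = 0 for i, j ≤ s. Then Ĉ is invertible, and setting d̂_i = d_i for i ≤ r and d̂_{r+j} = D for j ≤ s, one has d̂_i·Ĉ_{ij} = d̂_j·Ĉ_{ji} for all i, j ≤ r+s. -/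
open Matrix in


/- STATEMENT 0: The extended Cartan matrix Ĉ (block matrix built from a symmetrizable
matrix A, a completing matrix B, and a positive scalar D) is invertible and symmetrizable,
with extra symmetrizing factors all equal to D. -/

theorem extended_cartan_nondegenerate_symmetrizable
    (r s : ℕ) (hr : 1 ≤ r)
    (A : Matrix (Fin r) (Fin r) ℚ)
    (d : Fin r → ℚ) (hdpos : ∀ i, 0 < d i)
    (hsym : ∀ i j, d i * A i j = d j * A j i)
    (D : ℚ) (hD : 0 < D)
    (hs : s + A.rank = r)
    (B : Matrix (Fin s) (Fin r) ℚ)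
    (hrank : (Matrix.fromRows A B).rank = r)
    (Chat : Matrix (Fin r ⊕ Fin s) (Fin r ⊕ Fin s) ℚ)
    (hChat : Chat =
      Matrix.fromBlocks A (fun i j => D * (d i)⁻¹ * B j i) B 0)
    (dhat : Fin r ⊕ Fin s → ℚ)
    (hdhat : dhat = Sum.elim d (fun _ => D)) :
    IsUnit Chat ∧ ∀ i j, dhat i * Chat i j = dhat j * Chat j i := by
  subst hChat hdhat
  have hdne : ∀ i, d i ≠ 0 := fun i => (hdpos i).ne'
  have hc : ∀ (k : Fin r) (u : ℚ), d k * (D * (d k)⁻¹ * u) = D * u := fun k u => by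
    rw [show d k * (D * (d k)⁻¹ * u) = D * u * (d k * (d k)⁻¹) from by ring,
      mul_inv_cancel₀ (hdne k), mul_one]
  constructor
  · -- invertibility
    -- First: the kernel of `fromRows A B` is trivial.
    have hFR : ∀ z : Fin r → ℚ, A *ᵥ z = 0 → B *ᵥ z = 0 → z = 0 := by
      have h1 : LinearMap.ker (Matrix.fromRows A B).mulVecLin = ⊥ := by
        have h2 := (Matrix.fromRows A B).mulVecLin.finrank_range_add_finrank_ker
        rw [show Module.finrank ℚ (Fin r → ℚ) = r by simp] at h2
        have h3 : Module.finrank ℚ (LinearMap.range (Matrix.fromRows A B).mulVecLin) = r :=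
          hrank
        have h4 : Module.finrank ℚ (LinearMap.ker (Matrix.fromRows A B).mulVecLin) = 0 := by
          omega
        exact Submodule.finrank_eq_zero.mp h4
      intro z hA hB
      have hz : (Matrix.fromRows A B).mulVecLin z = 0 := by
        rw [Matrix.mulVecLin_apply, Matrix.fromRows_mulVec, hA, hB]
        ext (i | i) <;> rfl
      have hm := LinearMap.mem_ker.mpr hz
      rw [h1, Submodule.mem_bot] at hm
      exact hm
    -- finrank of the kernel of A is s
    have hkerA : Module.finrank ℚ (LinearMap.ker A.mulVecLin) = s := by
      have h2 := A.mulVecLin.finrank_range_add_finrank_ker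
      rw [show Module.finrank ℚ (Fin r → ℚ) = r by simp] at h2
      have h3 : Module.finrank ℚ (LinearMap.range A.mulVecLin) = A.rank := rfl
      omega
    -- the map z ↦ B *ᵥ z from ker A to ℚ^s is surjective
    set φ : LinearMap.ker A.mulVecLin →ₗ[ℚ] (Fin s → ℚ) :=
      B.mulVecLin ∘ₗ (LinearMap.ker A.mulVecLin).subtype with hφ
    have hφinj : Function.Injective φ := by
      rw [← LinearMap.ker_eq_bot, Submodule.eq_bot_iff]
      rintro ⟨z, hz⟩ h
      have hzA : A *ᵥ z = 0 := hz
      have hzB : B *ᵥ z = 0 := by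
        simpa [hφ, Matrix.mulVecLin_apply] using h
      exact Subtype.ext (hFR z hzA hzB)
    have hφsurj : Function.Surjective φ := by
      have := LinearMap.injective_iff_surjective_of_finrank_eq_finrank
        (f := φ) (by simp [hkerA])
      exact this.mp hφinj
    -- now prove det ≠ 0
    rw [Matrix.isUnit_iff_isUnit_det, isUnit_iff_ne_zero]
    intro hdet
    obtain ⟨v, hv0, hv⟩ := Matrix.exists_mulVec_eq_zero_iff.mpr hdet
    set x : Fin r → ℚ := v ∘ Sum.inl with hx
    set y : Fin s → ℚ := v ∘ Sum.inr with hy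
    replace hv := (Matrix.fromBlocks_mulVec A (fun i j => D * (d i)⁻¹ * B j i : Matrix (Fin r) (Fin s) ℚ) B 0 v).symm.trans hv
    have eq1 : A *ᵥ x + (fun i j => D * (d i)⁻¹ * B j i : Matrix (Fin r) (Fin s) ℚ) *ᵥ y = 0 := by
      ext i; exact congrFun hv (Sum.inl i)
    have eq2 : B *ᵥ x = 0 := by
      ext i; have := congrFun hv (Sum.inr i); simpa using this
    -- key: symmetrized first equation
    have eq1' : ∀ i, d i * (A *ᵥ x) i + D * (Bᵀ *ᵥ y) i = 0 := by
      intro i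
      have h := congrFun eq1 i
      simp only [Pi.add_apply, Pi.zero_apply] at h
      have hM : ((fun i j => D * (d i)⁻¹ * B j i : Matrix (Fin r) (Fin s) ℚ) *ᵥ y) i
          = D * (d i)⁻¹ * (Bᵀ *ᵥ y) i := by
        simp only [Matrix.mulVec, dotProduct, Matrix.transpose_apply, Finset.mul_sum]
        exact Finset.sum_congr rfl fun j _ => by ring
      rw [hM] at h
      have := congrArg (fun t => d i * t) h
      simp only [mul_add, mul_zero] at this
      rw [hc i ((Bᵀ *ᵥ y) i)] at this
      exact this
    -- for any z in ker A, (B z) ⬝ y = 0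
    have key : ∀ z : Fin r → ℚ, A *ᵥ z = 0 → (B *ᵥ z) ⬝ᵥ y = 0 := by
      intro z hz
      have h0 : ∑ i, z i * (d i * (A *ᵥ x) i + D * (Bᵀ *ᵥ y) i) = 0 := by
        simp [eq1']
      have hL : ∑ i, z i * (d i * (A *ᵥ x) i) = 0 := by
        calc ∑ i, z i * (d i * (A *ᵥ x) i)
            = ∑ i, ∑ j, z i * (d i * A i j) * x j := by
              refine Finset.sum_congr rfl fun i _ => ?_
              simp only [Matrix.mulVec, dotProduct, Finset.mul_sum]
              exact Finset.sum_congr rfl fun j _ => by ring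
          _ = ∑ i, ∑ j, z i * (d j * A j i) * x j := by
              refine Finset.sum_congr rfl fun i _ => Finset.sum_congr rfl fun j _ => by
                rw [hsym i j]
          _ = ∑ j, d j * x j * ∑ i, A j i * z i := by
              rw [Finset.sum_comm]
              refine Finset.sum_congr rfl fun j _ => ?_
              rw [Finset.mul_sum]
              exact Finset.sum_congr rfl fun i _ => by ring
          _ = 0 := by
              refine Finset.sum_eq_zero fun j _ => ?_
              have : (A *ᵥ z) j = 0 := congrFun hz j
              simp only [Matrix.mulVec, dotProduct] at this
              rw [this, mul_zero]
      have hR : ∑ i, z i * (D * (Bᵀ *ᵥ y) i) = D * ((B *ᵥ z) ⬝ᵥ y) := by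
        have : z ⬝ᵥ (Bᵀ *ᵥ y) = (B *ᵥ z) ⬝ᵥ y := by
          rw [Matrix.dotProduct_mulVec, Matrix.vecMul_transpose]
        rw [← this]
        simp only [dotProduct, Finset.mul_sum]
        exact Finset.sum_congr rfl fun i _ => by ring
      simp only [mul_add, Finset.sum_add_distrib] at h0
      rw [hL, hR, zero_add] at h0
      exact (mul_eq_zero.mp h0).resolve_left hD.ne'
    -- conclude y = 0
    have hy0 : y = 0 := by
      obtain ⟨⟨z, hz⟩, hzy⟩ := hφsurj y
      have hzy' : B *ᵥ z = y := by simpa [hφ, Matrix.mulVecLin_apply] using hzy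
      have := key z hz
      rw [hzy'] at this
      exact dotProduct_self_eq_zero.mp this
    -- conclude x = 0
    have hx0 : x = 0 := by
      have hAx : A *ᵥ x = 0 := by
        have : (fun i j => D * (d i)⁻¹ * B j i : Matrix (Fin r) (Fin s) ℚ) *ᵥ y = 0 := by
          rw [hy0]; exact Matrix.mulVec_zero _
        rwa [this, add_zero] at eq1
      exact hFR x hAx eq2
    apply hv0
    ext (i | i)
    · exact congrFun hx0 i
    · exact congrFun hy0 i
  · rintro (i | i) (j | j)
    · exact hsym i j
    · simp only [Matrix.fromBlocks_apply₁₂, Matrix.fromBlocks_apply₂₁, Sum.elim_inl, Sum.elim_inr]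
      exact hc i (B j i)
    · simp only [Matrix.fromBlocks_apply₁₂, Matrix.fromBlocks_apply₂₁, Sum.elim_inl, Sum.elim_inr]
      exact (hc j (B i j)).symm
    · rfl
end

section
/- For all j, k ∈ I one has d_{|i_j|}·b_{kj} = −d_{|i_k|}·b_{jk}; that is, the exchange matrix B is skew-symmetrizable with symmetrizers d_k = d_{|i_k|}. -/
open Classical in
/-- Indicator of a proposition: 1 if true, 0 if false. -/
noncomputable def ind {R : Type*} [Zero R] [One R] (P : Prop) : R :=
  if P then 1 else 0

/- STATEMENT 1: The exchange matrix B associated to a double reduced word is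
skew-symmetrizable with symmetrizers d_k = d_{|i_k|}:
for all j, k ∈ I one has d_{|i_j|}·b_{kj} = −d_{|i_k|}·b_{jk}. -/

theorem exchange_matrix_skew_symmetrizable
    (r rt m : ℤ) (hr : 1 ≤ r) (hrrt : r ≤ rt) (hm : 1 ≤ m)
    -- the word (i_1,…,i_m), extended by i_k = k for −r̃ ≤ k ≤ −1
    (i : ℤ → ℤ)
    (hiword : ∀ k, 1 ≤ k → k ≤ m → 1 ≤ |i k| ∧ |i k| ≤ r)
    (hineg : ∀ k, -rt ≤ k → k ≤ -1 → i k = k)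
    -- the index set I
    (Idx : ℤ → Prop)
    (hIdx : ∀ k, Idx k ↔ ((-rt ≤ k ∧ k ≤ -1) ∨ (1 ≤ k ∧ k ≤ m)))
    -- the signs ε_k, with ε_{m+1} = 1
    (ε : ℤ → ℚ)
    (hε : ∀ k, Idx k → ε k = if 0 < i k then 1 else -1)
    (hεm : ε (m + 1) = 1)
    -- k⁺ = min{ℓ ∈ I : ℓ > k, |i_ℓ| = |i_k|}, with k⁺ = m+1 if no such ℓ exists
    (kp : ℤ → ℤ)
    (hkp1 : ∀ k, Idx k → k < kp k)
    (hkp2 : ∀ k, Idx k → kp k ≤ m + 1)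
    (hkp3 : ∀ k, Idx k → kp k ≤ m → Idx (kp k) ∧ |i (kp k)| = |i k|)
    (hkp4 : ∀ k, Idx k → ∀ l, Idx l → k < l → l < kp k → |i l| ≠ |i k|)
    -- the matrix C and positive symmetrizers d with d_i C_{ij} = d_j C_{ji}
    (C : ℤ → ℤ → ℚ)
    (d : ℤ → ℚ)
    (hdpos : ∀ j, 1 ≤ j → j ≤ rt → 0 < d j)
    (hdsym : ∀ j k, 1 ≤ j → j ≤ rt → 1 ≤ k → k ≤ rt →
      d j * C j k = d k * C k j)
    -- the exchange matrix
    (b : ℤ → ℤ → ℚ)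
    (hb : ∀ j k, Idx j → Idx k → b j k =
      C (|i k|) (|i j|) / 2 *
        (ε j * ind (j = kp k) - ε k * ind (kp j = k)
          + ε j * ind (k < j) * ind (j < kp k) * ind (0 < j)
          - ε (kp j) * ind (k < kp j) * ind (kp j < kp k) * ind (kp j ≤ m)
          - ε k * ind (j < k) * ind (k < kp j) * ind (0 < k)
          + ε (kp k) * ind (j < kp k) * ind (kp k < kp j) * ind (kp k ≤ m))) :
    ∀ j k, Idx j → Idx k → d (|i j|) * b k j = -(d (|i k|) * b j k) := by
  have hbd : ∀ k, Idx k → 1 ≤ |i k| ∧ |i k| ≤ rt := by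
    intro k hk
    rcases (hIdx k).1 hk with ⟨h1, h2⟩ | ⟨h1, h2⟩
    · rw [hineg k h1 h2]
      rw [abs_of_nonpos (by omega)]
      omega
    · obtain ⟨h3, h4⟩ := hiword k h1 h2
      omega
  intro j k hj hk
  obtain ⟨hj1, hj2⟩ := hbd j hj
  obtain ⟨hk1, hk2⟩ := hbd k hk
  have hd := hdsym (|i j|) (|i k|) hj1 hj2 hk1 hk2
  rw [hb j k hj hk, hb k j hk hj]
  have e1 : (ind (k = kp j) : ℚ) = ind (kp j = k) := by simp [ind, eq_comm]
  have e2 : (ind (j = kp k) : ℚ) = ind (kp k = j) := by simp [ind, eq_comm]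
  rw [e1]
  rw [show (ind (j = kp k) : ℚ) = ind (kp k = j) from e2]
  linear_combination ((ε k * ind (kp j = k) - ε j * ind (kp k = j)
          + ε k * ind (j < k) * ind (k < kp j) * ind (0 < k)
          - ε (kp k) * ind (j < kp k) * ind (kp k < kp j) * ind (kp k ≤ m)
          - ε j * ind (k < j) * ind (j < kp k) * ind (0 < j)
          + ε (kp j) * ind (k < kp j) * ind (kp j < kp k) * ind (kp j ≤ m)) / 2) * hd
end

section
/- The submatrix of the exchange matrix B consisting of the rows indexed by the unfrozen indices I ∖ I₀ (and all columns indexed by I) has rank equal to |I ∖ I₀| over ℚ; that is, the unfrozen rows of B are linearly independent. -/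
/- STATEMENT 3: The rows of the exchange matrix B indexed by the unfrozen indices
I ∖ I₀ (an index k ∈ I is frozen iff k < 0 or k⁺ > m), viewed as vectors indexed by
the columns I, are linearly independent over ℚ; equivalently, the submatrix of B
formed by the unfrozen rows has rank |I ∖ I₀|. -/

theorem exchange_matrix_unfrozen_rows_full_rank
    (r rt m : ℤ) (hr : 1 ≤ r) (hrrt : r ≤ rt) (hm : 1 ≤ m)
    (i : ℤ → ℤ)
    (hiword : ∀ k, 1 ≤ k → k ≤ m → 1 ≤ |i k| ∧ |i k| ≤ r)
    (hineg : ∀ k, -rt ≤ k → k ≤ -1 → i k = k)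
    (Idx : ℤ → Prop)
    (hIdx : ∀ k, Idx k ↔ ((-rt ≤ k ∧ k ≤ -1) ∨ (1 ≤ k ∧ k ≤ m)))
    (ε : ℤ → ℚ)
    (hε : ∀ k, Idx k → ε k = if 0 < i k then 1 else -1)
    (hεm : ε (m + 1) = 1)
    (kp : ℤ → ℤ)
    (hkp1 : ∀ k, Idx k → k < kp k)
    (hkp2 : ∀ k, Idx k → kp k ≤ m + 1)
    (hkp3 : ∀ k, Idx k → kp k ≤ m → Idx (kp k) ∧ |i (kp k)| = |i k|)
    (hkp4 : ∀ k, Idx k → ∀ l, Idx l → k < l → l < kp k → |i l| ≠ |i k|)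
    (C : ℤ → ℤ → ℚ)
    (hCdiag : ∀ j, 1 ≤ j → j ≤ rt → C j j = 2)
    (b : ℤ → ℤ → ℚ)
    (hb : ∀ j k, Idx j → Idx k → b j k =
      C (|i k|) (|i j|) / 2 *
        (ε j * ind (j = kp k) - ε k * ind (kp j = k)
          + ε j * ind (k < j) * ind (j < kp k) * ind (0 < j)
          - ε (kp j) * ind (k < kp j) * ind (kp j < kp k) * ind (kp j ≤ m)
          - ε k * ind (j < k) * ind (k < kp j) * ind (0 < k)
          + ε (kp k) * ind (j < kp k) * ind (kp k < kp j) * ind (kp k ≤ m))) :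
    LinearIndependent ℚ
      (fun j : {j : ℤ // Idx j ∧ ¬(j < 0 ∨ m < kp j)} =>
        (fun k : {k : ℤ // Idx k} => b j.1 k.1)) := by
  classical
  -- Basic facts about unfrozen indices
  have hunf : ∀ j : ℤ, Idx j → ¬(j < 0 ∨ m < kp j) → 1 ≤ j ∧ j ≤ m ∧ kp j ≤ m := by
    intro j hj hnj
    push_neg at hnj
    rcases (hIdx j).1 hj with h | h
    · omega
    · omega
  -- kp is injective on unfrozen indices
  have hinj : ∀ j j' : ℤ, Idx j → ¬(j < 0 ∨ m < kp j) → Idx j' → ¬(j' < 0 ∨ m < kp j') →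
      kp j = kp j' → j = j' := by
    intro j j' hj hnj hj' hnj' hkk
    by_contra hne
    obtain ⟨hj1, hj2, hj3⟩ := hunf j hj hnj
    obtain ⟨hj1', hj2', hj3'⟩ := hunf j' hj' hnj'
    have hk3 := hkp3 j hj hj3
    have hk3' := hkp3 j' hj' hj3'
    rcases lt_or_gt_of_ne hne with h | h
    · exact hkp4 j hj j' hj' h (by have := hkp1 j' hj'; omega) (by rw [← hk3.2, hkk, hk3'.2])
    · exact hkp4 j' hj' j hj h (by have := hkp1 j hj; omega) (by rw [← hk3'.2, ← hkk, hk3.2])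
  -- nonzero value of ε
  have hεne : ∀ k, Idx k → ε k ≠ 0 := by
    intro k hk
    rw [hε k hk]
    split <;> norm_num
  -- diagonal entry: b j (kp j) = -ε (kp j)
  have hdiag : ∀ j : ℤ, Idx j → ¬(j < 0 ∨ m < kp j) → b j (kp j) = -ε (kp j) := by
    intro j hj hnj
    obtain ⟨hj1, hj2, hj3⟩ := hunf j hj hnj
    obtain ⟨hIk, hik⟩ := hkp3 j hj hj3
    have h1 : j < kp j := hkp1 j hj
    have h2 : kp j < kp (kp j) := hkp1 (kp j) hIk
    rw [hb j (kp j) hj hIk]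
    rw [hik, hCdiag (|i j|) (hiword j hj1 hj2).1 (le_trans (hiword j hj1 hj2).2 hrrt)]
    have e1 : ¬(j = kp (kp j)) := by omega
    have e2 : ¬(kp j < j) := by omega
    have e3 : ¬(kp j < kp j) := by omega
    have e4 : ¬(kp (kp j) < kp j) := by omega
    simp [ind, e1, e2, e3, e4]
  -- off-diagonal: b j' (kp j) = 0 when kp j' < kp j
  have hzero : ∀ j j' : ℤ, Idx j → ¬(j < 0 ∨ m < kp j) → Idx j' → ¬(j' < 0 ∨ m < kp j') →
      kp j' < kp j → b j' (kp j) = 0 := by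
    intro j j' hj hnj hj' hnj' hlt
    obtain ⟨hj1, hj2, hj3⟩ := hunf j hj hnj
    obtain ⟨hj1', hj2', hj3'⟩ := hunf j' hj' hnj'
    obtain ⟨hIk, _⟩ := hkp3 j hj hj3
    have h1 : j' < kp j' := hkp1 j' hj'
    have h2 : kp j < kp (kp j) := hkp1 (kp j) hIk
    rw [hb j' (kp j) hj' hIk]
    have e1 : ¬(j' = kp (kp j)) := by omega
    have e2 : ¬(kp j' = kp j) := by omega
    have e3 : ¬(kp j < j') := by omega
    have e4 : ¬(kp j < kp j') := by omega
    have e5 : ¬(kp (kp j) < kp j') := by omega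
    simp [ind, e1, e2, e3, e4, e5]
  rw [linearIndependent_iff']
  intro s g hsum
  by_contra hcon
  push_neg at hcon
  obtain ⟨j0, hj0s, hgj0⟩ := hcon
  set t := s.filter (fun j => g j ≠ 0) with ht
  have htne : t.Nonempty := ⟨j0, by simp [ht, hj0s, hgj0]⟩
  obtain ⟨jm, hjmt, hjmax⟩ := t.exists_max_image (fun j => kp j.1) htne
  have hjms : jm ∈ s := (Finset.mem_filter.1 hjmt).1
  have hgjm : g jm ≠ 0 := (Finset.mem_filter.1 hjmt).2
  obtain ⟨hjm1, hjm2, hjm3⟩ := hunf jm.1 jm.2.1 jm.2.2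
  have hIk : Idx (kp jm.1) := (hkp3 jm.1 jm.2.1 hjm3).1
  have hcol := congrFun hsum ⟨kp jm.1, hIk⟩
  rw [Finset.sum_apply] at hcol
  simp only [Pi.smul_apply, smul_eq_mul, Pi.zero_apply] at hcol
  rw [Finset.sum_eq_single jm (fun j hjs hjne => by
      by_cases hgj : g j = 0
      · rw [hgj, zero_mul]
      · have hjt : j ∈ t := Finset.mem_filter.2 ⟨hjs, hgj⟩
        have hle := hjmax j hjt
        have hlt : kp j.1 < kp jm.1 := by
          rcases lt_or_eq_of_le hle with h | h
          · exact h
          · exact absurd (Subtype.ext (hinj j.1 jm.1 j.2.1 j.2.2 jm.2.1 jm.2.2 h)) hjne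
        rw [hzero jm.1 j.1 jm.2.1 jm.2.2 j.2.1 j.2.2 hlt, mul_zero])
    (fun h => absurd hjms h)] at hcol
  rw [hdiag jm.1 jm.2.1 jm.2.2] at hcol
  have := hεne (kp jm.1) hIk
  have : g jm * -ε (kp jm.1) ≠ 0 := mul_ne_zero hgjm (by simpa using this)
  exact this hcol
end

section
/- For all j, k ∈ I one has [j⁺ ≤ m]·ε_{j⁺}·Ψ_{j⁺,k} − [j > 0]·ε_j·Ψ_{j,k} + (C_{|i_k|,|i_j|}/2)·[j⁺ > m]·(ε_{k⁺} − ε_k) = b_{jk} + M_{jk}. (This is the combinatorial identity underlying Proposition 3.17: the change-of-variables matrix expressing the coweight coordinates X_j in terms of the twisted generalized minors equals B̃ = B + M.) -/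
lemma ind_pos {R : Type*} [Zero R] [One R] {P : Prop} (h : P) : (ind P : R) = 1 := by
  simp [ind, h]

lemma ind_neg {R : Type*} [Zero R] [One R] {P : Prop} (h : ¬P) : (ind P : R) = 0 := by
  simp [ind, h]

/- STATEMENT 6: For all j, k ∈ I,
[j⁺ ≤ m]·ε_{j⁺}·Ψ_{j⁺,k} − [j > 0]·ε_j·Ψ_{j,k}
  + (C_{|i_k|,|i_j|}/2)·[j⁺ > m]·(ε_{k⁺} − ε_k) = b_{jk} + M_{jk},
the combinatorial identity underlying Proposition 3.17: the change-of-variables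
matrix expressing the coweight coordinates in terms of the twisted generalized
minors equals B̃ = B + M. -/

set_option maxHeartbeats 4000000 in
theorem chamber_ansatz_matrix_identity
    (r rt m : ℤ) (hr : 1 ≤ r) (hrrt : r ≤ rt) (hm : 1 ≤ m)
    (i : ℤ → ℤ)
    (hiword : ∀ k, 1 ≤ k → k ≤ m → 1 ≤ |i k| ∧ |i k| ≤ r)
    (hineg : ∀ k, -rt ≤ k → k ≤ -1 → i k = k)
    (Idx : ℤ → Prop)
    (hIdx : ∀ k, Idx k ↔ ((-rt ≤ k ∧ k ≤ -1) ∨ (1 ≤ k ∧ k ≤ m)))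
    (ε : ℤ → ℚ)
    (hε : ∀ k, Idx k → ε k = if 0 < i k then 1 else -1)
    (hεm : ε (m + 1) = 1)
    (kp : ℤ → ℤ)
    (hkp1 : ∀ k, Idx k → k < kp k)
    (hkp2 : ∀ k, Idx k → kp k ≤ m + 1)
    (hkp3 : ∀ k, Idx k → kp k ≤ m → Idx (kp k) ∧ |i (kp k)| = |i k|)
    (hkp4 : ∀ k, Idx k → ∀ l, Idx l → k < l → l < kp k → |i l| ≠ |i k|)
    (C : ℤ → ℤ → ℚ)
    (hCdiag : ∀ j, 1 ≤ j → j ≤ rt → C j j = 2)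
    -- the exchange matrix B
    (b : ℤ → ℤ → ℚ)
    (hb : ∀ j k, Idx j → Idx k → b j k =
      C (|i k|) (|i j|) / 2 *
        (ε j * ind (j = kp k) - ε k * ind (kp j = k)
          + ε j * ind (k < j) * ind (j < kp k) * ind (0 < j)
          - ε (kp j) * ind (k < kp j) * ind (kp j < kp k) * ind (kp j ≤ m)
          - ε k * ind (j < k) * ind (k < kp j) * ind (0 < k)
          + ε (kp k) * ind (j < kp k) * ind (kp k < kp j) * ind (kp k ≤ m)))
    -- the matrix M
    (M : ℤ → ℤ → ℚ)
    (hM : ∀ j k, Idx j → Idx k → M j k =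
      C (|i k|) (|i j|) / 2 *
        (ind (m < kp j) * ind (m < kp k) + ind (j < 0) * ind (k < 0)))
    -- the matrix Ψ_{j,k}, defined for 1 ≤ j ≤ m and k ∈ I
    (Psi : ℤ → ℤ → ℚ)
    (hPsi : ∀ j k, 1 ≤ j → j ≤ m → Idx k → Psi j k =
      -(ε j * ε k) * (ind (j = k) + ind (j = kp k))
        + C (|i k|) (|i j|) / 2 *
            (ε j * (ε (kp k) - ε k) * ind (kp k < j)
              - (1 + ε j * ε k) * ind (k < j) * ind (j < kp k))) :
    ∀ j k, Idx j → Idx k →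
      ind (kp j ≤ m) * ε (kp j) * Psi (kp j) k
          - ind (0 < j) * ε j * Psi j k
          + C (|i k|) (|i j|) / 2 * ind (m < kp j) * (ε (kp k) - ε k)
        = b j k + M j k := by
  intro j k hj hk
  have hjlt := hkp1 j hj
  have hklt := hkp1 k hk
  have hjp2 := hkp2 j hj
  have hkk2 := hkp2 k hk
  obtain hjI := (hIdx j).mp hj
  obtain hkI := (hIdx k).mp hk
  have habs : ∀ l, Idx l → 1 ≤ |i l| ∧ |i l| ≤ rt := by
    intro l hl
    rcases (hIdx l).mp hl with ⟨h1, h2⟩ | ⟨h1, h2⟩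
    · rw [hineg l h1 h2, abs_of_neg (by omega : l < 0)]
      omega
    · have := hiword l h1 h2
      exact ⟨this.1, this.2.trans hrrt⟩
  have hkpchar : ∀ l, Idx l →
      (1 ≤ kp l ∧ kp l ≤ m ∧ Idx (kp l) ∧ |i (kp l)| = |i l|) ∨ kp l = m + 1 := by
    intro l hl
    by_cases h : kp l ≤ m
    · obtain ⟨hI2, habs2⟩ := hkp3 l hl h
      left
      refine ⟨?_, h, hI2, habs2⟩
      rcases (hIdx _).mp hI2 with ⟨h1, h2⟩ | ⟨h1, h2⟩
      · exfalso
        have hl2 := hkp1 l hl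
        rcases (hIdx l).mp hl with ⟨h3, h4⟩ | ⟨h3, h4⟩
        · rw [hineg l h3 h4, hineg (kp l) h1 h2, abs_of_neg (by omega : kp l < 0),
            abs_of_neg (by omega : l < 0)] at habs2
          omega
        · omega
      · exact h1
    · right
      have := hkp2 l hl
      omega
  have hCc : |i j| = |i k| → C |i k| |i j| / 2 = 1 := by
    intro h
    rw [h, hCdiag _ (habs k hk).1 (habs k hk).2]
    norm_num
  have hε1 : ∀ l, Idx l → ε l = 1 ∨ ε l = -1 := by
    intro l hl; rw [hε l hl]; split_ifs <;> simp
  have hεkp : ∀ l, Idx l → ε (kp l) = 1 ∨ ε (kp l) = -1 := by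
    intro l hl
    rcases hkpchar l hl with ⟨_, _, hI2, _⟩ | h
    · exact hε1 _ hI2
    · rw [h, hεm]; left; rfl
  have hεm' : ∀ l, Idx l → m < kp l → ε (kp l) = 1 := by
    intro l hl h
    have h2 := hkp2 l hl
    have h3 : kp l = m + 1 := by omega
    rw [h3, hεm]
  have hεneg : ∀ l, Idx l → l ≤ -1 → ε l = -1 := by
    intro l hl h1
    rcases (hIdx l).mp hl with ⟨h2, h3⟩ | ⟨h2, h3⟩
    · rw [hε l hl, hineg l h2 h3, if_neg (by omega)]
    · omega
  have e2 : j = k → C |i k| |i j| / 2 = 1 ∧ ε j = ε k ∧ ε (kp j) = ε (kp k) := by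
    intro h; subst h; exact ⟨hCc rfl, rfl, rfl⟩
  have e3 : j = kp k → C |i k| |i j| / 2 = 1 ∧ ε j = ε (kp k) := by
    intro h
    have hkkm : kp k ≤ m := by rcases hjI with ⟨h1, h2⟩ | ⟨h1, h2⟩ <;> omega
    have h2 := (hkp3 k hk hkkm).2
    refine ⟨hCc ?_, by rw [h]⟩
    rw [h, h2]
  have e4 : kp j = k → C |i k| |i j| / 2 = 1 ∧ ε (kp j) = ε k := by
    intro h
    have hjpm : kp j ≤ m := by rcases hkI with ⟨h1, h2⟩ | ⟨h1, h2⟩ <;> omega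
    have h2 := (hkp3 j hj hjpm).2
    refine ⟨hCc ?_, by rw [h]⟩
    rw [← h2, h]
  have e5 : kp j = kp k → kp j ≤ m →
      C |i k| |i j| / 2 = 1 ∧ ε (kp j) = ε (kp k) ∧ j = k := by
    intro h hle
    have h2 := (hkp3 j hj hle).2
    have h3 := (hkp3 k hk (h ▸ hle)).2
    refine ⟨hCc (by rw [← h2, h, h3]), by rw [h], ?_⟩
    rcases lt_trichotomy j k with hlt | he | hlt
    · exact absurd (by rw [← h3, ← h, h2] : |i k| = |i j|)
        (hkp4 j hj k hk hlt (by omega))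
    · exact he
    · exact absurd (by rw [← h2, h, h3] : |i j| = |i k|)
        (hkp4 k hk j hj hlt (by omega))
  have E1 : ε j * ind (j = k) = ε k * ind (j = k) := by
    by_cases h : j = k
    · simp only [ind_pos h, (e2 h).2.1]
    · simp only [ind_neg h, mul_zero]
  have E2 : C |i k| |i j| / 2 * ind (j = k) = ind (j = k) := by
    by_cases h : j = k
    · simp only [ind_pos h, (e2 h).1, mul_one]
    · simp only [ind_neg h, mul_zero]
  have E3 : ε j * ind (j = kp k) = ε (kp k) * ind (j = kp k) := by
    by_cases h : j = kp k
    · simp only [ind_pos h, (e3 h).2]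
    · simp only [ind_neg h, mul_zero]
  have E4 : C |i k| |i j| / 2 * ind (j = kp k) = ind (j = kp k) := by
    by_cases h : j = kp k
    · simp only [ind_pos h, (e3 h).1, mul_one]
    · simp only [ind_neg h, mul_zero]
  have E5 : ε (kp j) * ind (kp j = k) = ε k * ind (kp j = k) := by
    by_cases h : kp j = k
    · simp only [ind_pos h, (e4 h).2]
    · simp only [ind_neg h, mul_zero]
  have E6 : C |i k| |i j| / 2 * ind (kp j = k) = ind (kp j = k) := by
    by_cases h : kp j = k
    · simp only [ind_pos h, (e4 h).1, mul_one]
    · simp only [ind_neg h, mul_zero]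
  have E7 : ε (kp j) * ind (kp j = kp k) = ε (kp k) * ind (kp j = kp k) := by
    by_cases h : kp j = kp k
    · rw [h]
    · simp only [ind_neg h, mul_zero]
  have E8 : C |i k| |i j| / 2 * (ind (kp j = kp k) * ind (kp j ≤ m))
      = ind (kp j = kp k) * ind (kp j ≤ m) := by
    by_cases h : kp j = kp k
    · by_cases h2 : kp j ≤ m
      · rw [(e5 h h2).1, one_mul]
      · simp only [ind_neg h2, mul_zero]
    · simp only [ind_neg h, zero_mul, mul_zero]
  have E9 : ind (kp j = kp k) * ind (kp j ≤ m) = (ind (j = k) * ind (kp j ≤ m) : ℚ) := by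
    by_cases h : kp j = kp k
    · by_cases h2 : kp j ≤ m
      · rw [ind_pos h, ind_pos (e5 h h2).2.2]
      · simp only [ind_neg h2, mul_zero]
    · have h3 : ¬ j = k := fun he => h (by rw [he])
      simp only [ind_neg h, ind_neg h3, zero_mul]
  have E10 : ε k * ind (k ≤ -1) = -ind (k ≤ -1) := by
    by_cases h : k ≤ -1
    · simp only [ind_pos h, hεneg k hk h, mul_one]
    · simp only [ind_neg h, mul_zero, neg_zero]
  have E11 : ε (kp k) * ind (m < kp k) = ind (m < kp k) := by
    by_cases h : m < kp k
    · simp only [ind_pos h, hεm' k hk h, one_mul]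
    · simp only [ind_neg h, mul_zero]
  have E12 : ε (kp j) * ind (m < kp j) = ind (m < kp j) := by
    by_cases h : m < kp j
    · simp only [ind_pos h, hεm' j hj h, one_mul]
    · simp only [ind_neg h, mul_zero]
  have E13 : ind (j = k) * (ind (m < kp j) - ind (m < kp k)) = (0 : ℚ) := by
    by_cases h : j = k
    · rw [h]; ring
    · simp only [ind_neg h, zero_mul]
  rw [hb j k hj hk, hM j k hj hk]
  rcases hkpchar j hj with ⟨hjp1, hjpm, hjpI, hjpabs⟩ | hjpm1
  · rw [hPsi (kp j) k hjp1 hjpm hk, hjpabs]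
    rcases hjI with ⟨hj1, hj2⟩ | ⟨hj1, hj2⟩
    · -- j < 0, kp j ≤ m
      rcases hkpchar k hk with ⟨hkk1, hkkm, _, _⟩ | hkkm1 <;>
      rcases hkI with ⟨hk1, hk2⟩ | ⟨hk1, hk2⟩ <;>
      rcases lt_trichotomy j k with h1 | h1 | h1 <;>
      rcases lt_trichotomy (kp j) (kp k) with h2 | h2 | h2 <;>
      (try (exfalso; omega)) <;>
      rcases lt_trichotomy j (kp k) with h3 | h3 | h3 <;>
      (try (exfalso; omega)) <;>
      rcases lt_trichotomy (kp j) k with h4 | h4 | h4 <;>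
      first
      | (exfalso; omega)
      | (simp (disch := omega) only [ind_pos, ind_neg] at E1 E2 E3 E4 E5 E6 E7 E8 E9 E10 E11 E12 E13 ⊢
         first
         | ring1
         | linarith
         | (rcases hε1 j hj with ej | ej <;> rcases hε1 k hk with ek | ek <;>
            rcases hεkp j hj with ejp | ejp <;> rcases hεkp k hk with ekk | ekk <;>
            (try simp only [ej, ek, ejp, ekk]) <;>
            first
            | ring1
            | linarith))
    · -- j > 0, kp j ≤ m
      rw [hPsi j k hj1 hj2 hk]
      rcases hkpchar k hk with ⟨hkk1, hkkm, _, _⟩ | hkkm1 <;>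
      rcases hkI with ⟨hk1, hk2⟩ | ⟨hk1, hk2⟩ <;>
      rcases lt_trichotomy j k with h1 | h1 | h1 <;>
      rcases lt_trichotomy (kp j) (kp k) with h2 | h2 | h2 <;>
      (try (exfalso; omega)) <;>
      rcases lt_trichotomy j (kp k) with h3 | h3 | h3 <;>
      (try (exfalso; omega)) <;>
      rcases lt_trichotomy (kp j) k with h4 | h4 | h4 <;>
      first
      | (exfalso; omega)
      | (simp (disch := omega) only [ind_pos, ind_neg] at E1 E2 E3 E4 E5 E6 E7 E8 E9 E10 E11 E12 E13 ⊢
         first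
         | ring1
         | linarith
         | (rcases hε1 j hj with ej | ej <;> rcases hε1 k hk with ek | ek <;>
            rcases hεkp j hj with ejp | ejp <;> rcases hεkp k hk with ekk | ekk <;>
            (try simp only [ej, ek, ejp, ekk]) <;>
            first
            | ring1
            | linarith))
  · rcases hjI with ⟨hj1, hj2⟩ | ⟨hj1, hj2⟩
    · -- j < 0, kp j = m + 1
      rcases hkpchar k hk with ⟨hkk1, hkkm, _, _⟩ | hkkm1 <;>
      rcases hkI with ⟨hk1, hk2⟩ | ⟨hk1, hk2⟩ <;>
      rcases lt_trichotomy j k with h1 | h1 | h1 <;>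
      rcases lt_trichotomy (kp j) (kp k) with h2 | h2 | h2 <;>
      (try (exfalso; omega)) <;>
      rcases lt_trichotomy j (kp k) with h3 | h3 | h3 <;>
      (try (exfalso; omega)) <;>
      rcases lt_trichotomy (kp j) k with h4 | h4 | h4 <;>
      first
      | (exfalso; omega)
      | (simp (disch := omega) only [ind_pos, ind_neg] at E1 E2 E3 E4 E5 E6 E7 E8 E9 E10 E11 E12 E13 ⊢
         first
         | ring1
         | linarith
         | (rcases hε1 j hj with ej | ej <;> rcases hε1 k hk with ek | ek <;>
            rcases hεkp j hj with ejp | ejp <;> rcases hεkp k hk with ekk | ekk <;>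
            (try simp only [ej, ek, ejp, ekk]) <;>
            first
            | ring1
            | linarith))
    · -- j > 0, kp j = m + 1
      rw [hPsi j k hj1 hj2 hk]
      rcases hkpchar k hk with ⟨hkk1, hkkm, _, _⟩ | hkkm1 <;>
      rcases hkI with ⟨hk1, hk2⟩ | ⟨hk1, hk2⟩ <;>
      rcases lt_trichotomy j k with h1 | h1 | h1 <;>
      rcases lt_trichotomy (kp j) (kp k) with h2 | h2 | h2 <;>
      (try (exfalso; omega)) <;>
      rcases lt_trichotomy j (kp k) with h3 | h3 | h3 <;>
      (try (exfalso; omega)) <;>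
      rcases lt_trichotomy (kp j) k with h4 | h4 | h4 <;>
      first
      | (exfalso; omega)
      | (simp (disch := omega) only [ind_pos, ind_neg] at E1 E2 E3 E4 E5 E6 E7 E8 E9 E10 E11 E12 E13 ⊢
         first
         | ring1
         | linarith
         | (rcases hε1 j hj with ej | ej <;> rcases hε1 k hk with ek | ek <;>
            rcases hεkp j hj with ejp | ejp <;> rcases hεkp k hk with ekk | ekk <;>
            (try simp only [ej, ek, ejp, ekk]) <;>
            first
            | ring1
            | linarith))
end

section
/- If the matrix C has integer entries, then the matrix B̃ = B + M has integer entries; that is, b_{jk} + M_{jk} ∈ ℤ for all j, k ∈ I (even though B itself may have half-integer entries in rows and columns indexed by frozen indices). -/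
lemma ind_spec (P : Prop) : ∃ a : ℤ, (ind P : ℚ) = (a : ℚ) ∧ ((a = 1 ∧ P) ∨ (a = 0 ∧ ¬P)) := by
  by_cases h : P
  · exact ⟨1, by simp [ind, h], Or.inl ⟨rfl, h⟩⟩
  · exact ⟨0, by simp [ind, h], Or.inr ⟨rfl, h⟩⟩

lemma ind_mul (P Q : Prop) : (ind P : ℚ) * ind Q = ind (P ∧ Q) := by
  by_cases hP : P <;> by_cases hQ : Q <;> simp [ind, hP, hQ]

lemma e_ind3 (e : ℚ) (P Q R : Prop) :
    e * ind P * ind Q * ind R = e * ind (P ∧ Q ∧ R) := by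
  by_cases hP : P <;> by_cases hQ : Q <;> by_cases hR : R <;> simp [ind, hP, hQ, hR]


lemma parity_key (j k pj pk m : ℤ)
    (a1 a2 a3 a4 a5 a6 a7 a8 : ℤ)
    (ha1 : (a1 = 1 ∧ j = pk) ∨ (a1 = 0 ∧ ¬j = pk))
    (ha2 : (a2 = 1 ∧ pj = k) ∨ (a2 = 0 ∧ ¬pj = k))
    (ha3 : (a3 = 1 ∧ (k < j ∧ j < pk ∧ 0 < j)) ∨ (a3 = 0 ∧ ¬(k < j ∧ j < pk ∧ 0 < j)))
    (ha4 : (a4 = 1 ∧ (k < pj ∧ pj < pk ∧ pj ≤ m)) ∨ (a4 = 0 ∧ ¬(k < pj ∧ pj < pk ∧ pj ≤ m)))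
    (ha5 : (a5 = 1 ∧ (j < k ∧ k < pj ∧ 0 < k)) ∨ (a5 = 0 ∧ ¬(j < k ∧ k < pj ∧ 0 < k)))
    (ha6 : (a6 = 1 ∧ (j < pk ∧ pk < pj ∧ pk ≤ m)) ∨ (a6 = 0 ∧ ¬(j < pk ∧ pk < pj ∧ pk ≤ m)))
    (ha7 : (a7 = 1 ∧ (m < pj ∧ m < pk)) ∨ (a7 = 0 ∧ ¬(m < pj ∧ m < pk)))
    (ha8 : (a8 = 1 ∧ (j < 0 ∧ k < 0)) ∨ (a8 = 0 ∧ ¬(j < 0 ∧ k < 0)))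
    (t1 : j < pj) (t2 : k < pk) (t3 : pj ≤ m + 1) (t4 : pk ≤ m + 1)
    (t5 : 1 ≤ pj) (t6 : 1 ≤ pk) (t7 : j ≠ 0) (t8 : k ≠ 0)
    (hjm : j ≤ m) (hkm : k ≤ m)
    (h1 : j ≠ k) (h2 : j ≠ pk) (h3 : pj ≠ k) (h4 : ¬(pj = pk ∧ pj ≤ m)) :
    (a1 + a2 + a3 + a4 + a5 + a6 + a7 + a8) % 2 = 0 := by
  omega


lemma even_comb (ej ek epj epk a1 a2 a3 a4 a5 a6 a7 a8 : ℤ)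
    (hej : ej = 1 ∨ ej = -1) (hek : ek = 1 ∨ ek = -1)
    (hepj : epj = 1 ∨ epj = -1) (hepk : epk = 1 ∨ epk = -1)
    (hb1 : a1 = 0 ∨ a1 = 1) (hb2 : a2 = 0 ∨ a2 = 1) (hb3 : a3 = 0 ∨ a3 = 1)
    (hb4 : a4 = 0 ∨ a4 = 1) (hb5 : a5 = 0 ∨ a5 = 1) (hb6 : a6 = 0 ∨ a6 = 1)
    (hb7 : a7 = 0 ∨ a7 = 1) (hb8 : a8 = 0 ∨ a8 = 1)
    (hpar : (a1 + a2 + a3 + a4 + a5 + a6 + a7 + a8) % 2 = 0) :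
    (ej * a1 - ek * a2 + ej * a3 - epj * a4 - ek * a5 + epk * a6 + (a7 + a8)) % 2 = 0 := by
  rcases hej with rfl | rfl <;> rcases hek with rfl | rfl <;>
    rcases hepj with rfl | rfl <;> rcases hepk with rfl | rfl <;> omega

/- STATEMENT 7: If the matrix C has integer entries, then B̃ = B + M has integer
entries: b_{jk} + M_{jk} ∈ ℤ for all j, k ∈ I. -/

set_option maxHeartbeats 1600000 in
theorem Btilde_integral
    (r rt m : ℤ) (hr : 1 ≤ r) (hrrt : r ≤ rt) (hm : 1 ≤ m)
    (i : ℤ → ℤ)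
    (hiword : ∀ k, 1 ≤ k → k ≤ m → 1 ≤ |i k| ∧ |i k| ≤ r)
    (hineg : ∀ k, -rt ≤ k → k ≤ -1 → i k = k)
    (Idx : ℤ → Prop)
    (hIdx : ∀ k, Idx k ↔ ((-rt ≤ k ∧ k ≤ -1) ∨ (1 ≤ k ∧ k ≤ m)))
    (ε : ℤ → ℚ)
    (hε : ∀ k, Idx k → ε k = if 0 < i k then 1 else -1)
    (hεm : ε (m + 1) = 1)
    (kp : ℤ → ℤ)
    (hkp1 : ∀ k, Idx k → k < kp k)
    (hkp2 : ∀ k, Idx k → kp k ≤ m + 1)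
    (hkp3 : ∀ k, Idx k → kp k ≤ m → Idx (kp k) ∧ |i (kp k)| = |i k|)
    (hkp4 : ∀ k, Idx k → ∀ l, Idx l → k < l → l < kp k → |i l| ≠ |i k|)
    -- C is an integer matrix with diagonal entries 2
    (C : ℤ → ℤ → ℤ)
    (hCdiag : ∀ j, 1 ≤ j → j ≤ rt → C j j = 2)
    (b : ℤ → ℤ → ℚ)
    (hb : ∀ j k, Idx j → Idx k → b j k =
      (C (|i k|) (|i j|) : ℚ) / 2 *
        (ε j * ind (j = kp k) - ε k * ind (kp j = k)
          + ε j * ind (k < j) * ind (j < kp k) * ind (0 < j)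
          - ε (kp j) * ind (k < kp j) * ind (kp j < kp k) * ind (kp j ≤ m)
          - ε k * ind (j < k) * ind (k < kp j) * ind (0 < k)
          + ε (kp k) * ind (j < kp k) * ind (kp k < kp j) * ind (kp k ≤ m)))
    (M : ℤ → ℤ → ℚ)
    (hM : ∀ j k, Idx j → Idx k → M j k =
      (C (|i k|) (|i j|) : ℚ) / 2 *
        (ind (m < kp j) * ind (m < kp k) + ind (j < 0) * ind (k < 0))) :
    ∀ j k, Idx j → Idx k → ∃ n : ℤ, b j k + M j k = (n : ℚ) := by
  intro j k hj hk
  have hjI := (hIdx j).1 hj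
  have hkI := (hIdx k).1 hk
  have hεspec : ∀ l, Idx l → ∃ e : ℤ, ε l = (e : ℚ) ∧ (e = 1 ∨ e = -1) := by
    intro l hl
    rw [hε l hl]
    by_cases h : 0 < i l
    · exact ⟨1, by simp [h], Or.inl rfl⟩
    · exact ⟨-1, by simp [h], Or.inr rfl⟩
  have hεpspec : ∀ l, Idx l → ∃ e : ℤ, ε (kp l) = (e : ℚ) ∧ (e = 1 ∨ e = -1) := by
    intro l hl
    by_cases h : kp l ≤ m
    · exact hεspec _ (hkp3 l hl h).1
    · have h1 : kp l = m + 1 := by have := hkp2 l hl; omega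
      rw [h1, hεm]; exact ⟨1, by norm_num, Or.inl rfl⟩
  obtain ⟨ej, hej, hej'⟩ := hεspec j hj
  obtain ⟨ek, hek, hek'⟩ := hεspec k hk
  obtain ⟨epj, hepj, hepj'⟩ := hεpspec j hj
  obtain ⟨epk, hepk, hepk'⟩ := hεpspec k hk
  obtain ⟨a1, ha1, ha1'⟩ := ind_spec (j = kp k)
  obtain ⟨a2, ha2, ha2'⟩ := ind_spec (kp j = k)
  obtain ⟨a3, ha3, ha3'⟩ := ind_spec (k < j ∧ j < kp k ∧ 0 < j)
  obtain ⟨a4, ha4, ha4'⟩ := ind_spec (k < kp j ∧ kp j < kp k ∧ kp j ≤ m)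
  obtain ⟨a5, ha5, ha5'⟩ := ind_spec (j < k ∧ k < kp j ∧ 0 < k)
  obtain ⟨a6, ha6, ha6'⟩ := ind_spec (j < kp k ∧ kp k < kp j ∧ kp k ≤ m)
  obtain ⟨a7, ha7, ha7'⟩ := ind_spec (m < kp j ∧ m < kp k)
  obtain ⟨a8, ha8, ha8'⟩ := ind_spec (j < 0 ∧ k < 0)
  have key : b j k + M j k = (C (|i k|) (|i j|) : ℚ) / 2 *
      (((ej * a1 - ek * a2 + ej * a3 - epj * a4 - ek * a5 + epk * a6 + (a7 + a8) : ℤ)) : ℚ) := by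
    rw [hb j k hj hk, hM j k hj hk, e_ind3, e_ind3, e_ind3, e_ind3, ind_mul, ind_mul,
      hej, hek, hepj, hepk, ha1, ha2, ha3, ha4, ha5, ha6, ha7, ha8]
    push_cast
    ring
  by_cases heq : |i j| = |i k|
  · have hbound : 1 ≤ |i j| ∧ |i j| ≤ rt := by
      rcases hjI with ⟨h, h'⟩ | ⟨h, h'⟩
      · rw [hineg j h h', abs_of_neg (show j < 0 by omega)]; omega
      · have := hiword j h h'; omega
    have hC : C (|i k|) (|i j|) = 2 := by rw [← heq]; exact hCdiag _ hbound.1 hbound.2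
    refine ⟨ej * a1 - ek * a2 + ej * a3 - epj * a4 - ek * a5 + epk * a6 + (a7 + a8), ?_⟩
    rw [key, hC]; push_cast; ring
  · have hjm : j ≤ m := by rcases hjI with ⟨h, h'⟩ | ⟨h, h'⟩ <;> omega
    have hkm : k ≤ m := by rcases hkI with ⟨h, h'⟩ | ⟨h, h'⟩ <;> omega
    have h1 : j ≠ k := fun h => heq (by rw [h])
    have h2 : j ≠ kp k := by
      by_cases h : kp k ≤ m
      · intro hh; exact heq (hh ▸ (hkp3 k hk h).2)
      · have := hkp2 k hk; intro hh; omega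
    have h3 : kp j ≠ k := by
      by_cases h : kp j ≤ m
      · intro hh; apply heq; rw [← (hkp3 j hj h).2, hh]
      · have := hkp2 j hj; intro hh; omega
    have h4 : ¬(kp j = kp k ∧ kp j ≤ m) := by
      rintro ⟨hh, hm'⟩
      apply heq
      rw [← (hkp3 j hj hm').2, hh, (hkp3 k hk (hh ▸ hm')).2]
    have hkppos : ∀ l, Idx l → 1 ≤ kp l := by
      intro l hl
      rcases (hIdx l).1 hl with ⟨h, h'⟩ | ⟨h, h'⟩
      · by_cases hh : kp l ≤ m
        · obtain ⟨hI2, habs⟩ := hkp3 l hl hh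
          rcases (hIdx _).1 hI2 with ⟨g, g'⟩ | ⟨g, g'⟩
          · exfalso
            rw [hineg _ g g', hineg _ h h', abs_of_neg (show kp l < 0 by omega),
              abs_of_neg (show l < 0 by omega)] at habs
            have := hkp1 l hl; omega
          · omega
        · have := hkp2 l hl; omega
      · have := hkp1 l hl; omega
    have t1 := hkp1 j hj
    have t2 := hkp1 k hk
    have t3 := hkp2 j hj
    have t4 := hkp2 k hk
    have t5 := hkppos j hj
    have t6 := hkppos k hk
    have t7 : j ≠ 0 := by rcases hjI with ⟨h, h'⟩ | ⟨h, h'⟩ <;> omega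
    have t8 : k ≠ 0 := by rcases hkI with ⟨h, h'⟩ | ⟨h, h'⟩ <;> omega
    have hpar : (a1 + a2 + a3 + a4 + a5 + a6 + a7 + a8) % 2 = 0 :=
      parity_key j k (kp j) (kp k) m a1 a2 a3 a4 a5 a6 a7 a8
        ha1' ha2' ha3' ha4' ha5' ha6' ha7' ha8' t1 t2 t3 t4 t5 t6 t7 t8 hjm hkm h1 h2 h3 h4
    have heven : (ej * a1 - ek * a2 + ej * a3 - epj * a4 - ek * a5 + epk * a6 + (a7 + a8)) % 2 = 0 :=
      even_comb ej ek epj epk a1 a2 a3 a4 a5 a6 a7 a8 hej' hek' hepj' hepk'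
        (ha1'.elim (fun h => Or.inr h.1) (fun h => Or.inl h.1))
        (ha2'.elim (fun h => Or.inr h.1) (fun h => Or.inl h.1))
        (ha3'.elim (fun h => Or.inr h.1) (fun h => Or.inl h.1))
        (ha4'.elim (fun h => Or.inr h.1) (fun h => Or.inl h.1))
        (ha5'.elim (fun h => Or.inr h.1) (fun h => Or.inl h.1))
        (ha6'.elim (fun h => Or.inr h.1) (fun h => Or.inl h.1))
        (ha7'.elim (fun h => Or.inr h.1) (fun h => Or.inl h.1))
        (ha8'.elim (fun h => Or.inr h.1) (fun h => Or.inl h.1)) hpar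
    obtain ⟨t, ht⟩ := Int.dvd_of_emod_eq_zero heven
    exact ⟨C (|i k|) (|i j|) * t, by rw [key, ht]; push_cast; ring⟩
end

section
/- Let G be a commutative group (written multiplicatively) and let X : I → G be any function. Define t'_k ∈ G for 1 ≤ k ≤ m + r̃ by t'_k = (∏_{j ∈ I, j < k, |i_j| = |i_k|} X_j)^{ε_k} for 1 ≤ k ≤ m, and t'_{m+s} = ∏_{j ∈ I, |i_j| = s} X_j for 1 ≤ s ≤ r̃. For j ∈ I set p(j) = j⁺ if j⁺ ≤ m and p(j) = m + |i_j| if j⁺ = m+1, and set ε'_j = ε_{p(j)} if p(j) ≤ m and ε'_j = 1 if p(j) > m. Then for every j ∈ I one has X_j = (t'_{p(j)})^{ε'_j} · (t'_j)^{−ε_j} if j > 0, and X_j = (t'_{p(j)})^{ε'_j} if j < 0. (This inverts the change of variables between the coweight coordinates X_j and the coordinates t'_k.) -/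
/- STATEMENT 8: Inversion of the change of variables between the coweight
coordinates X_j and the coordinates t'_k, in an arbitrary commutative group G. -/

theorem coweight_coordinate_inversion
    (r rt m : ℤ) (hr : 1 ≤ r) (hrrt : r ≤ rt) (hm : 1 ≤ m)
    (i : ℤ → ℤ)
    (hiword : ∀ k, 1 ≤ k → k ≤ m → 1 ≤ |i k| ∧ |i k| ≤ r)
    (hineg : ∀ k, -rt ≤ k → k ≤ -1 → i k = k)
    (Idx : ℤ → Prop)
    (hIdx : ∀ k, Idx k ↔ ((-rt ≤ k ∧ k ≤ -1) ∨ (1 ≤ k ∧ k ≤ m)))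
    (ε : ℤ → ℤ)
    (hε : ∀ k, Idx k → ε k = if 0 < i k then 1 else -1)
    (kp : ℤ → ℤ)
    (hkp1 : ∀ k, Idx k → k < kp k)
    (hkp2 : ∀ k, Idx k → kp k ≤ m + 1)
    (hkp3 : ∀ k, Idx k → kp k ≤ m → Idx (kp k) ∧ |i (kp k)| = |i k|)
    (hkp4 : ∀ k, Idx k → ∀ l, Idx l → k < l → l < kp k → |i l| ≠ |i k|)
    -- an arbitrary commutative group G and a function X : I → G
    (G : Type*) [CommGroup G]
    (X : ℤ → G)
    -- the coordinates t'_k for 1 ≤ k ≤ m + r̃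
    (t' : ℤ → G)
    (ht1 : ∀ k, 1 ≤ k → k ≤ m →
      t' k = (∏ j ∈ (Finset.Icc (-rt) (-1) ∪ Finset.Icc 1 m).filter
          (fun j => j < k ∧ |i j| = |i k|), X j) ^ (ε k))
    (ht2 : ∀ s, 1 ≤ s → s ≤ rt →
      t' (m + s) = ∏ j ∈ (Finset.Icc (-rt) (-1) ∪ Finset.Icc 1 m).filter
          (fun j => |i j| = s), X j)
    -- p(j) and ε'_j
    (p : ℤ → ℤ)
    (hp : ∀ j, Idx j → p j = if kp j ≤ m then kp j else m + |i j|)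
    (ε' : ℤ → ℤ)
    (hε' : ∀ j, Idx j → ε' j = if p j ≤ m then ε (p j) else 1) :
    ∀ j, Idx j →
      (0 < j → X j = t' (p j) ^ (ε' j) * t' j ^ (-(ε j))) ∧
      (j < 0 → X j = t' (p j) ^ (ε' j)) := by

  intro j hj
  have hmemS : ∀ l, l ∈ (Finset.Icc (-rt) (-1) ∪ Finset.Icc 1 m) ↔ Idx l := by
    intro l
    simp only [Finset.mem_union, Finset.mem_Icc, hIdx]
  have hεpm : ∀ k, Idx k → ε k = 1 ∨ ε k = -1 := by
    intro k hk
    rw [hε k hk]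
    split <;> simp
  have hdz : ∀ (a : G) (e : ℤ), (e = 1 ∨ e = -1) → (a ^ e) ^ e = a := by
    rintro a e (rfl | rfl) <;> simp
  have habsj : 1 ≤ |i j| ∧ |i j| ≤ rt := by
    rcases (hIdx j).1 hj with ⟨h1, h2⟩ | ⟨h1, h2⟩
    · rw [hineg j h1 h2, abs_of_neg (by omega : j < 0)]; omega
    · have := hiword j h1 h2; omega
  have hkpj1 : j < kp j := hkp1 j hj
  have hkpj2 : kp j ≤ m + 1 := hkp2 j hj
  have hkpub : ∀ l, Idx l → l ≤ m := by
    intro l hl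
    rcases (hIdx l).1 hl with ⟨h1, h2⟩ | ⟨h1, h2⟩ <;> omega
  have lemA : (Finset.Icc (-rt) (-1) ∪ Finset.Icc 1 m).filter
      (fun l => l < kp j ∧ |i l| = |i j|) =
      (Finset.Icc (-rt) (-1) ∪ Finset.Icc 1 m).filter
      (fun l => l ≤ j ∧ |i l| = |i j|) := by
    ext l
    simp only [Finset.mem_filter, hmemS]
    constructor
    · rintro ⟨hl, hlt, habs⟩
      refine ⟨hl, ?_, habs⟩
      by_contra h
      exact hkp4 j hj l hl (by omega) hlt habs
    · rintro ⟨hl, hle, habs⟩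
      exact ⟨hl, by omega, habs⟩
  have hmain : t' (p j) ^ ε' j =
      ∏ l ∈ (Finset.Icc (-rt) (-1) ∪ Finset.Icc 1 m).filter
        (fun l => l ≤ j ∧ |i l| = |i j|), X l := by
    by_cases hkm : kp j ≤ m
    · obtain ⟨hIkp, habskp⟩ := hkp3 j hj hkm
      have hkp_pos : 1 ≤ kp j := by
        by_contra h
        push_neg at h
        rcases (hIdx (kp j)).1 hIkp with ⟨h1, h2⟩ | ⟨h1, h2⟩
        · rw [hineg (kp j) h1 h2, abs_of_neg (by omega : kp j < 0)] at habskp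
          rcases (hIdx j).1 hj with ⟨g1, g2⟩ | ⟨g1, g2⟩
          · rw [hineg j g1 g2, abs_of_neg (by omega : j < 0)] at habskp
            omega
          · omega
        · omega
      have hpj : p j = kp j := by rw [hp j hj, if_pos hkm]
      have hε'j : ε' j = ε (kp j) := by
        rw [hε' j hj, hpj, if_pos hkm]
      have e1 : t' (kp j) = (∏ l ∈ (Finset.Icc (-rt) (-1) ∪ Finset.Icc 1 m).filter
          (fun l => l < kp j ∧ |i l| = |i j|), X l) ^ (ε (kp j)) := by
        rw [ht1 (kp j) hkp_pos hkm, habskp]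
      rw [hpj, hε'j, e1, hdz _ _ (hεpm _ hIkp), lemA]
    · have hkpm1 : kp j = m + 1 := by omega
      have hpj : p j = m + |i j| := by rw [hp j hj, if_neg hkm]
      have hε'j : ε' j = 1 := by
        rw [hε' j hj, hpj, if_neg (by omega)]
      have e2 : t' (m + |i j|) = ∏ l ∈ (Finset.Icc (-rt) (-1) ∪ Finset.Icc 1 m).filter
          (fun l => |i l| = |i j|), X l := ht2 (|i j|) habsj.1 habsj.2
      have e3 : (Finset.Icc (-rt) (-1) ∪ Finset.Icc 1 m).filter
          (fun l => |i l| = |i j|) = (Finset.Icc (-rt) (-1) ∪ Finset.Icc 1 m).filter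
          (fun l => l < kp j ∧ |i l| = |i j|) := by
        ext l
        simp only [Finset.mem_filter, hmemS]
        constructor
        · rintro ⟨hl, habs⟩
          exact ⟨hl, by have := hkpub l hl; omega, habs⟩
        · rintro ⟨hl, _, habs⟩
          exact ⟨hl, habs⟩
      rw [hpj, hε'j, zpow_one, e2, e3, lemA]
  constructor
  · intro hjpos
    have hj1 : 1 ≤ j ∧ j ≤ m := by
      rcases (hIdx j).1 hj with ⟨h1, h2⟩ | ⟨h1, h2⟩ <;> omega
    have hjnot : j ∉ (Finset.Icc (-rt) (-1) ∪ Finset.Icc 1 m).filter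
        (fun l => l < j ∧ |i l| = |i j|) := by
      simp only [Finset.mem_filter]
      rintro ⟨_, hlt, _⟩
      omega
    have hsplit : (Finset.Icc (-rt) (-1) ∪ Finset.Icc 1 m).filter
        (fun l => l ≤ j ∧ |i l| = |i j|) =
        insert j ((Finset.Icc (-rt) (-1) ∪ Finset.Icc 1 m).filter
        (fun l => l < j ∧ |i l| = |i j|)) := by
      ext l
      simp only [Finset.mem_insert, Finset.mem_filter, hmemS]
      constructor
      · rintro ⟨hl, hle, habs⟩
        rcases eq_or_lt_of_le hle with rfl | hlt
        · exact Or.inl rfl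
        · exact Or.inr ⟨hl, hlt, habs⟩
      · rintro (rfl | ⟨hl, hlt, habs⟩)
        · exact ⟨hj, le_refl _, rfl⟩
        · exact ⟨hl, le_of_lt hlt, habs⟩
    have e4 : t' j ^ (ε j) = ∏ l ∈ (Finset.Icc (-rt) (-1) ∪ Finset.Icc 1 m).filter
        (fun l => l < j ∧ |i l| = |i j|), X l := by
      rw [ht1 j hj1.1 hj1.2, hdz _ _ (hεpm _ hj)]
    rw [hmain, hsplit, Finset.prod_insert hjnot, zpow_neg, e4]
    group
  · intro hjneg
    have hjI : -rt ≤ j ∧ j ≤ -1 := by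
      rcases (hIdx j).1 hj with ⟨h1, h2⟩ | ⟨h1, h2⟩ <;> omega
    have hsing : (Finset.Icc (-rt) (-1) ∪ Finset.Icc 1 m).filter
        (fun l => l ≤ j ∧ |i l| = |i j|) = {j} := by
      ext l
      simp only [Finset.mem_filter, Finset.mem_singleton, hmemS]
      constructor
      · rintro ⟨hl, hle, habs⟩
        have hlI : -rt ≤ l ∧ l ≤ -1 := by
          rcases (hIdx l).1 hl with ⟨h1, h2⟩ | ⟨h1, h2⟩ <;> omega
        rw [hineg l hlI.1 hlI.2, hineg j hjI.1 hjI.2,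
          abs_of_neg (by omega : l < 0), abs_of_neg (by omega : j < 0)] at habs
        omega
      · rintro rfl
        exact ⟨hj, le_refl _, rfl⟩
    rw [hmain, hsing, Finset.prod_singleton]
end

section
/- Let B be a rational I × I matrix with the exchange property and let k ∈ I ∖ I₀. Then B' = μ_k(B) has the exchange property, and B'_{ij} − B_{ij} is an integer for all i, j ∈ I. Consequently, if M is any rational I × I matrix with M_{ij} = 0 unless both i and j lie in I₀, and B + M has integer entries, then μ_k(B) + M has integer entries. -/
/- STATEMENT 9: Matrix mutation preserves the exchange property, changes entries
by integers, and hence preserves integrality of B + M for M supported on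
frozen × frozen indices. -/

theorem mutation_preserves_exchange_property
    {ι : Type*} [Fintype ι] [DecidableEq ι]
    (I0 : Finset ι)
    (B : Matrix ι ι ℚ)
    -- B has the exchange property
    (hEx : ∀ i j, (i ∉ I0 ∨ j ∉ I0) → ∃ n : ℤ, B i j = (n : ℚ))
    (k : ι) (hk : k ∉ I0)
    -- B' = μ_k(B)
    (B' : Matrix ι ι ℚ)
    (hB' : ∀ i j, B' i j =
      if i = k ∨ j = k then -B i j
      else if 0 < B i k * B k j then B i j + |B i k| * B k j
      else B i j) :
    (∀ i j, (i ∉ I0 ∨ j ∉ I0) → ∃ n : ℤ, B' i j = (n : ℚ)) ∧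
    (∀ i j, ∃ n : ℤ, B' i j - B i j = (n : ℚ)) ∧
    (∀ M : Matrix ι ι ℚ, (∀ i j, ¬(i ∈ I0 ∧ j ∈ I0) → M i j = 0) →
      (∀ i j, ∃ n : ℤ, B i j + M i j = (n : ℚ)) →
      ∀ i j, ∃ n : ℤ, B' i j + M i j = (n : ℚ)) := by
  have hdiff : ∀ i j, ∃ n : ℤ, B' i j - B i j = (n : ℚ) := by
    intro i j
    rw [hB' i j]
    by_cases h1 : i = k ∨ j = k
    · simp only [h1, if_true]
      have hij : ∃ n : ℤ, B i j = (n : ℚ) := by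
        rcases h1 with h | h
        · exact hEx i j (Or.inl (h ▸ hk))
        · exact hEx i j (Or.inr (h ▸ hk))
      obtain ⟨n, hn⟩ := hij
      exact ⟨-2 * n, by rw [hn]; push_cast; ring⟩
    · simp only [h1, if_false]
      by_cases h2 : 0 < B i k * B k j
      · simp only [h2, if_true]
        obtain ⟨a, ha⟩ := hEx i k (Or.inr hk)
        obtain ⟨b, hb⟩ := hEx k j (Or.inl hk)
        exact ⟨|a| * b, by rw [ha, hb]; push_cast; ring⟩
      · simp only [h2, if_false]
        exact ⟨0, by simp⟩
  refine ⟨?_, hdiff, ?_⟩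
  · intro i j hij
    obtain ⟨n, hn⟩ := hEx i j hij
    obtain ⟨m, hm⟩ := hdiff i j
    exact ⟨m + n, by push_cast; rw [← hn, ← hm]; ring⟩
  · intro M _ hBM i j
    obtain ⟨n, hn⟩ := hBM i j
    obtain ⟨m, hm⟩ := hdiff i j
    exact ⟨m + n, by push_cast; rw [← hn, ← hm]; ring⟩
end
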